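/- Suppose the lifted exponential exp(-t𝓛_𝐀) converges as t → ∞ to the rank-one matrix 1_{2n} 𝐟ᵀ for some nonnegative 𝐟 ∈ ℝ^{2n} with 𝐟ᵀ1_{2n} = 1, and exp(-t𝓛_{|A|}) converges to 1_n νᵀ with νᵀ1_n = 1. Then 𝐟 = (1/2)[νᵀ, νᵀ]ᵀ, Φ_odd(t) and Φ_even(t) both converge to (1/2)·1_n νᵀ, and consequently exp(-tL) = Φ_even(t) - Φ_odd(t) converges to the zero matrix as t → ∞. -/

import Mathlib

open Matrix Finset

/-- Entrywise positive part. -/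
noncomputable def matPos {n : ℕ} (A : Matrix (Fin n) (Fin n) ℝ) : Matrix (Fin n) (Fin n) ℝ :=
  fun i j => if 0 < A i j then A i j else 0

/-- Entrywise negative part. -/
noncomputable def matNeg {n : ℕ} (A : Matrix (Fin n) (Fin n) ℝ) : Matrix (Fin n) (Fin n) ℝ :=
  fun i j => if A i j < 0 then A i j else 0

/-- Entrywise absolute value. -/
def absM {m : Type*} (A : Matrix m m ℝ) : Matrix m m ℝ := fun i j => |A i j|

/-- Laplacian of a (nonnegative) matrix. -/
noncomputable def lap {m : Type*} [Fintype m] [DecidableEq m] (B : Matrix m m ℝ) :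
    Matrix m m ℝ :=
  fun i j => if i = j then ∑ k ∈ Finset.univ.erase i, B i k else -B i j

/-- Signed Laplacian. -/
noncomputable def signedLap {n : ℕ} (A : Matrix (Fin n) (Fin n) ℝ) : Matrix (Fin n) (Fin n) ℝ :=
  fun i j => if i = j then ∑ k ∈ Finset.univ.erase i, |A i k| else -A i j

/-- Diagonal matrix of row sums. -/
noncomputable def deltaM {n : ℕ} (M : Matrix (Fin n) (Fin n) ℝ) : Matrix (Fin n) (Fin n) ℝ :=
  Matrix.diagonal (fun i => ∑ j, M i j)


notation "mexp" => NormedSpace.exp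

open Filter Topology

/-!
The lifted Laplacian is the image of `(𝓛_{|A|}, L)` under the algebra homomorphism
`(X, Y) ↦ [[(X + Y)/2, (X - Y)/2], [(X - Y)/2, (X + Y)/2]]` (conjugation of `diag(X, Y)` by
`[[1, 1], [1, -1]]`). Being continuous, it commutes with `exp`, so `exp(-t𝓛_𝐀)` has diagonal
blocks `Φ_even(t)` and off-diagonal blocks `Φ_odd(t)`. As both off-diagonal blocks are `Φ_odd`,
their limits `1 𝐟₂ᵀ` and `1 𝐟₁ᵀ` coincide, and `Φ_even + Φ_odd = exp(-t𝓛_{|A|}) → 1 νᵀ` gives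
`𝐟₁ + 𝐟₂ = ν`. Hence both blocks tend to `1 νᵀ / 2` and `exp(-tL) = Φ_even - Φ_odd → 0`.
-/

section Lift

variable (m : Type*) [Fintype m] [DecidableEq m]

noncomputable def liftHom :
    (Matrix m m ℝ × Matrix m m ℝ) →ₐ[ℝ] Matrix (m ⊕ m) (m ⊕ m) ℝ :=
  AlgHom.ofLinearMap
    { toFun := fun p => fromBlocks ((2⁻¹ : ℝ) • (p.1 + p.2)) ((2⁻¹ : ℝ) • (p.1 - p.2))
        ((2⁻¹ : ℝ) • (p.1 - p.2)) ((2⁻¹ : ℝ) • (p.1 + p.2))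
      map_add' := fun p q => by
        simp only [Prod.fst_add, Prod.snd_add, fromBlocks_add]
        congr 1 <;> module
      map_smul' := fun c p => by
        simp only [Prod.smul_fst, Prod.smul_snd, fromBlocks_smul, RingHom.id_apply]
        congr 1 <;> module }
    (by
      simp only [LinearMap.coe_mk, AddHom.coe_mk, Prod.fst_one, Prod.snd_one, sub_self,
        smul_zero, ← fromBlocks_one]
      rw [← two_smul ℝ (1 : Matrix m m ℝ), smul_smul, inv_mul_cancel₀ two_ne_zero, one_smul])
    (fun p q => by
      simp only [LinearMap.coe_mk, AddHom.coe_mk, Prod.fst_mul, Prod.snd_mul, fromBlocks_multiply]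
      congr 1 <;> simp only [smul_mul_assoc, mul_smul_comm, mul_add, add_mul, mul_sub, sub_mul] <;>
        module)

variable {m}

theorem liftHom_apply (x y : Matrix m m ℝ) :
    liftHom m (x, y) = fromBlocks ((2⁻¹ : ℝ) • (x + y)) ((2⁻¹ : ℝ) • (x - y))
      ((2⁻¹ : ℝ) • (x - y)) ((2⁻¹ : ℝ) • (x + y)) := rfl

theorem continuous_liftHom : Continuous (liftHom m) :=
  Continuous.matrix_fromBlocks (by fun_prop) (by fun_prop) (by fun_prop) (by fun_prop)

theorem exp_liftHom (x y : Matrix m m ℝ) :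
    mexp (liftHom m (x, y)) = liftHom m (mexp x, mexp y) := by
  -- `map_exp` needs normed algebras; `exp` itself does not depend on the chosen matrix norm.
  let : NormedRing (Matrix m m ℝ) := Matrix.linftyOpNormedRing
  let : NormedAlgebra ℝ (Matrix m m ℝ) := Matrix.linftyOpNormedAlgebra
  let : NormedAlgebra ℚ (Matrix m m ℝ) := .restrictScalars ℚ ℝ _
  let : NormedRing (Matrix (m ⊕ m) (m ⊕ m) ℝ) := Matrix.linftyOpNormedRing
  refine (NormedSpace.map_exp (liftHom m) continuous_liftHom (x, y)).symm.trans ?_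
  congr 1
  ext1
  · exact Prod.fst_exp (x, y)
  · exact Prod.snd_exp (x, y)

end Lift

section Laplacian

variable {m : Type*} [Fintype m] [DecidableEq m]

theorem lap_eq_diagonal_sub {B : Matrix m m ℝ} (hB : ∀ i, B i i = 0) :
    lap B = diagonal (fun i => ∑ k, B i k) - B := by
  ext i j
  by_cases hij : i = j
  · subst hij
    simp [lap, Finset.sum_erase_eq_sub (Finset.mem_univ i), hB]
  · simp [lap, hij]

theorem sum_row_liftHom (X Y : Matrix m m ℝ) :
    (fun i => ∑ k, liftHom m (X, Y) i k) =
      Sum.elim (fun i => ∑ k, X i k) (fun i => ∑ k, X i k) := by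
  ext (i | i) <;>
  · simp only [liftHom_apply, Fintype.sum_sum_type, fromBlocks_apply₁₁, fromBlocks_apply₁₂,
      fromBlocks_apply₂₁, fromBlocks_apply₂₂, Sum.elim_inl, Sum.elim_inr, Matrix.smul_apply,
      Matrix.add_apply, Matrix.sub_apply, smul_eq_mul, ← Finset.sum_add_distrib]
    congr 1 with k
    ring

theorem liftHom_self (D : Matrix m m ℝ) : liftHom m (D, D) = fromBlocks D 0 0 D := by
  rw [liftHom_apply, sub_self, smul_zero, ← two_smul ℝ D, smul_smul, inv_mul_cancel₀ two_ne_zero,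
    one_smul]

theorem lap_liftHom {X Y : Matrix m m ℝ} (hX : ∀ i, X i i = 0) (hY : ∀ i, Y i i = 0) :
    lap (liftHom m (X, Y)) = liftHom m (lap X, diagonal (fun i => ∑ k, X i k) - Y) := by
  have hXY : ∀ i, liftHom m (X, Y) i i = 0 := by
    rintro (i | i) <;> simp [liftHom_apply, hX, hY]
  rw [lap_eq_diagonal_sub hXY, lap_eq_diagonal_sub hX, sum_row_liftHom, ← fromBlocks_diagonal,
    ← liftHom_self, ← map_sub, Prod.mk_sub_mk]

end Laplacian

theorem matPos_eq {n : ℕ} (A : Matrix (Fin n) (Fin n) ℝ) :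
    matPos A = (2⁻¹ : ℝ) • (absM A + A) := by
  ext i j
  rcases lt_or_ge 0 (A i j) with h | h
  · simp only [matPos, h, ↓reduceIte, Matrix.smul_apply, Matrix.add_apply, absM, abs_of_pos h,
      smul_eq_mul]
    ring
  · simp [matPos, absM, not_lt.mpr h, abs_of_nonpos h]

theorem absM_matNeg_eq {n : ℕ} (A : Matrix (Fin n) (Fin n) ℝ) :
    absM (matNeg A) = (2⁻¹ : ℝ) • (absM A - A) := by
  ext i j
  rcases lt_or_ge (A i j) 0 with h | h
  · simp only [absM, matNeg, h, ↓reduceIte, abs_of_neg h, Matrix.smul_apply, Matrix.sub_apply,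
      smul_eq_mul]
    ring
  · simp [matNeg, absM, not_lt.mpr h, abs_of_nonneg h]

theorem fromBlocks_matPos_absM_matNeg {n : ℕ} (A : Matrix (Fin n) (Fin n) ℝ) :
    fromBlocks (matPos A) (absM (matNeg A)) (absM (matNeg A)) (matPos A) =
      liftHom (Fin n) (absM A, A) := by
  rw [matPos_eq, absM_matNeg_eq, liftHom_apply]

theorem signedLap_eq_diagonal_sub {n : ℕ} {A : Matrix (Fin n) (Fin n) ℝ} (hA : ∀ i, A i i = 0) :
    signedLap A = diagonal (fun i => ∑ k, |A i k|) - A := by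
  ext i j
  by_cases hij : i = j
  · subst hij
    simp [signedLap, Finset.sum_erase_eq_sub (Finset.mem_univ i), hA]
  · simp [signedLap, hij]

theorem lap_fromBlocks_matPos_absM_matNeg {n : ℕ} {A : Matrix (Fin n) (Fin n) ℝ} (hA : ∀ i, A i i = 0) :
    lap (fromBlocks (matPos A) (absM (matNeg A)) (absM (matNeg A)) (matPos A)) =
      liftHom (Fin n) (lap (absM A), signedLap A) := by
  have habs : ∀ i, absM A i i = 0 := fun i => by simp [absM, hA]
  rw [fromBlocks_matPos_absM_matNeg, lap_liftHom habs hA, signedLap_eq_diagonal_sub hA]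
  rfl

theorem Filter.Tendsto.liftHom_blocks {m α : Type*} [Fintype m] [DecidableEq m] {l : Filter α}
    {E F : α → Matrix m m ℝ} {N : Matrix (m ⊕ m) (m ⊕ m) ℝ}
    (h : Tendsto (fun t => liftHom m (E t, F t)) l (𝓝 N)) :
    Tendsto (fun t => (2⁻¹ : ℝ) • (E t + F t)) l (𝓝 N.toBlocks₁₁) ∧
      Tendsto (fun t => (2⁻¹ : ℝ) • (E t - F t)) l (𝓝 N.toBlocks₁₂) ∧
      Tendsto (fun t => (2⁻¹ : ℝ) • (E t - F t)) l (𝓝 N.toBlocks₂₁) := by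
  refine ⟨?_, ?_, ?_⟩
  · simpa [Function.comp_def, liftHom_apply] using
      ((continuous_matrix fun _ _ => continuous_id.matrix_elem _ _ :
        Continuous (toBlocks₁₁ : Matrix (m ⊕ m) (m ⊕ m) ℝ → _)).tendsto N).comp h
  · simpa [Function.comp_def, liftHom_apply] using
      ((continuous_matrix fun _ _ => continuous_id.matrix_elem _ _ :
        Continuous (toBlocks₁₂ : Matrix (m ⊕ m) (m ⊕ m) ℝ → _)).tendsto N).comp h
  · simpa [Function.comp_def, liftHom_apply] using
      ((continuous_matrix fun _ _ => continuous_id.matrix_elem _ _ :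
        Continuous (toBlocks₂₁ : Matrix (m ⊕ m) (m ⊕ m) ℝ → _)).tendsto N).comp h

theorem stmt17_general {n : ℕ} (A : Matrix (Fin n) (Fin n) ℝ) (hdiag : ∀ i, A i i = 0)
    (f : Fin n ⊕ Fin n → ℝ)
    (hconvA : Tendsto (fun t : ℝ => mexp (-t • lap (Matrix.fromBlocks (matPos A)
        (absM (matNeg A)) (absM (matNeg A)) (matPos A)))) atTop
      (nhds (Matrix.of fun _ j => f j)))
    (ν : Fin n → ℝ)
    (hconvAbs : Tendsto (fun t : ℝ => mexp (-t • lap (absM A))) atTop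
      (nhds (Matrix.of fun _ j => ν j))) :
    (∀ i, f (Sum.inl i) = ν i / 2 ∧ f (Sum.inr i) = ν i / 2) ∧
    Tendsto (fun t : ℝ => (2⁻¹ : ℝ) • (mexp (-t • lap (absM A)) - mexp (-t • signedLap A)))
      atTop (nhds ((2⁻¹ : ℝ) • Matrix.of fun _ j => ν j)) ∧
    Tendsto (fun t : ℝ => (2⁻¹ : ℝ) • (mexp (-t • lap (absM A)) + mexp (-t • signedLap A)))
      atTop (nhds ((2⁻¹ : ℝ) • Matrix.of fun _ j => ν j)) ∧
    Tendsto (fun t : ℝ => mexp (-t • signedLap A)) atTop (nhds 0) := by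
  set E := fun t : ℝ => mexp (-t • lap (absM A))
  set F := fun t : ℝ => mexp (-t • signedLap A)
  have hlift : ∀ t : ℝ, mexp (-t • lap (fromBlocks (matPos A) (absM (matNeg A))
      (absM (matNeg A)) (matPos A))) = liftHom (Fin n) (E t, F t) := fun t => by
    rw [lap_fromBlocks_matPos_absM_matNeg hdiag, ← map_smul, Prod.smul_mk, exp_liftHom]
  set N : Matrix (Fin n ⊕ Fin n) (Fin n ⊕ Fin n) ℝ := of fun _ j => f j
  simp_rw [hlift] at hconvA
  obtain ⟨heven, hodd₁₂, hodd₂₁⟩ := hconvA.liftHom_blocks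
  have hf_symm : ∀ j, f (.inl j) = f (.inr j) := fun j =>
    congrFun₂ (tendsto_nhds_unique (X := Matrix (Fin n) (Fin n) ℝ) hodd₂₁ hodd₁₂) j j
  have hE : Tendsto E atTop (𝓝 (N.toBlocks₁₁ + N.toBlocks₁₂)) := by
    convert heven.add hodd₁₂ using 1
    ext1 t
    module
  have hν : ∀ j, ν j = f (.inl j) + f (.inr j) := fun j =>
    congrFun₂ (tendsto_nhds_unique (X := Matrix (Fin n) (Fin n) ℝ) hconvAbs hE) j j
  have hhalf₁₁ : N.toBlocks₁₁ = (2⁻¹ : ℝ) • of fun _ j => ν j := by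
    ext i j
    simp only [N, toBlocks₁₁, of_apply, Matrix.smul_apply, hν j, hf_symm j, smul_eq_mul]
    ring
  have hhalf₁₂ : N.toBlocks₁₂ = (2⁻¹ : ℝ) • of fun _ j => ν j := by
    ext i j
    simp only [N, toBlocks₁₂, of_apply, Matrix.smul_apply, hν j, hf_symm j, smul_eq_mul]
    ring
  refine ⟨fun i => ⟨by linarith [hν i, hf_symm i], by linarith [hν i, hf_symm i]⟩,
    hhalf₁₂ ▸ hodd₁₂, hhalf₁₁ ▸ heven, ?_⟩
  have hF := heven.sub hodd₁₂
  rw [hhalf₁₁, hhalf₁₂, sub_self] at hF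
  convert hF using 1
  ext1 t
  module

theorem stmt17 {n : ℕ} (A : Matrix (Fin n) (Fin n) ℝ) (hdiag : ∀ i, A i i = 0)
    (f : Fin n ⊕ Fin n → ℝ) (hf0 : ∀ i, 0 ≤ f i) (hf1 : ∑ i, f i = 1)
    (hconvA : Tendsto (fun t : ℝ => mexp (-t • lap (Matrix.fromBlocks (matPos A)
        (absM (matNeg A)) (absM (matNeg A)) (matPos A)))) atTop
      (nhds (Matrix.of fun _ j => f j)))
    (ν : Fin n → ℝ) (hν1 : ∑ i, ν i = 1)
    (hconvAbs : Tendsto (fun t : ℝ => mexp (-t • lap (absM A))) atTop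
      (nhds (Matrix.of fun _ j => ν j))) :
    (∀ i, f (Sum.inl i) = ν i / 2 ∧ f (Sum.inr i) = ν i / 2) ∧
    Tendsto (fun t : ℝ => (2⁻¹ : ℝ) • (mexp (-t • lap (absM A)) - mexp (-t • signedLap A)))
      atTop (nhds ((2⁻¹ : ℝ) • Matrix.of fun _ j => ν j)) ∧
    Tendsto (fun t : ℝ => (2⁻¹ : ℝ) • (mexp (-t • lap (absM A)) + mexp (-t • signedLap A)))
      atTop (nhds ((2⁻¹ : ℝ) • Matrix.of fun _ j => ν j)) ∧
    Tendsto (fun t : ℝ => mexp (-t • signedLap A)) atTop (nhds 0) :=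
  stmt17_general A hdiag f hconvA ν hconvAbs
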